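/- arXiv:2507.04169 — 2 statements merged into one kernel-verified Lean document; each statement's English description precedes it below -/
import Mathlib

section
/- Let m ≥ 9 and S = ⟨m, m+1, ..., 2m-5⟩. Then the void of S is M(S) = {1, 2, 3, 2m-4, 2m-3, 2m-2}. -/
/-!
The sums of exactly `k` elements of `[a, b]` fill the interval `[k a, k b]`, so the semigroup
generated by `[a, b]` is the union of these intervals. For `[m, 2m - 5]` the intervals with
`k ≥ 2` overlap consecutively precisely when `m ≥ 9`, so the semigroup is
`{0} ∪ [m, 2m - 5] ∪ [2m, ∞)`. Its Frobenius number is `2m - 1`, and the void is read off.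
-/

theorem AddSubmonoid.mem_closure_Icc_iff {a b n : ℕ} :
    n ∈ AddSubmonoid.closure (Set.Icc a b) ↔ ∃ k, k * a ≤ n ∧ n ≤ k * b := by
  constructor
  · intro h
    induction h using AddSubmonoid.closure_induction with
    | mem x hx => exact ⟨1, by simpa using hx⟩
    | zero => exact ⟨0, by simp⟩
    | add x y _ _ hx hy =>
      obtain ⟨k, hk⟩ := hx
      obtain ⟨l, hl⟩ := hy
      exact ⟨k + l, by constructor <;> nlinarith⟩
  · rintro ⟨k, hk⟩
    induction k generalizing n with
    | zero => simp_all
    | succ k ih =>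
      have hab : a ≤ b := by nlinarith
      have hkab : k * a ≤ k * b := Nat.mul_le_mul_left k hab
      rw [add_one_mul, add_one_mul] at hk
      -- peel off a summand `r ∈ [a, b]` leaving `n - r ∈ [k a, k b]`
      set r := min b (n - k * a)
      have hn : n = (n - r) + r := by omega
      rw [hn]
      exact add_mem (ih ⟨by omega, by omega⟩) (AddSubmonoid.subset_closure ⟨by omega, by omega⟩)

theorem mem_closure_Icc_two_mul_sub_five_iff {m n : ℕ} (hm : 9 ≤ m) :
    n ∈ AddSubmonoid.closure (Set.Icc m (2 * m - 5)) ↔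
      n = 0 ∨ n ∈ Set.Icc m (2 * m - 5) ∨ 2 * m ≤ n := by
  rw [AddSubmonoid.mem_closure_Icc_iff]
  constructor
  · rintro ⟨_ | _ | k, hlo, hhi⟩
    · simp_all
    · simp_all
    · right; right; nlinarith
  · rintro (rfl | ⟨hlo, hhi⟩ | h)
    · exact ⟨0, by simp⟩
    · exact ⟨1, by simpa using ⟨hlo, hhi⟩⟩
    · refine ⟨n / m, Nat.div_mul_le_self n m, ?_⟩
      have hq : 2 ≤ n / m := (Nat.le_div_iff_mul_le (by omega)).2 (by linarith)
      have hlt : n < m * (n / m + 1) := Nat.lt_mul_div_succ n (by omega)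
      have h5 : 5 ≤ 2 * m := by omega
      zify [h5] at hlt ⊢
      nlinarith

theorem isGreatest_not_mem_closure_Icc_two_mul_sub_five {m : ℕ} (hm : 9 ≤ m) :
    IsGreatest {n | n ∉ AddSubmonoid.closure (Set.Icc m (2 * m - 5))} (2 * m - 1) := by
  refine ⟨?_, fun n hn => ?_⟩ <;>
    simp only [Set.mem_ofPred_eq, mem_closure_Icc_two_mul_sub_five_iff hm, Set.mem_Icc] at * <;>
    omega

theorem stmt_9 (m : ℕ) (hm : 9 ≤ m)
    (S : Set ℕ)
    (hS : S = {n : ℕ | n ∈ AddSubmonoid.closure (Set.Icc m (2 * m - 5))})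
    (F : ℕ) (hF : IsGreatest {n : ℕ | n ∉ S} F) :
    {x : ℕ | x ∉ S ∧ F - x ∉ S} =
      ({1, 2, 3, 2 * m - 4, 2 * m - 3, 2 * m - 2} : Set ℕ) := by
  subst hS
  obtain rfl : F = 2 * m - 1 := hF.unique (isGreatest_not_mem_closure_Icc_two_mul_sub_five hm)
  ext x
  simp only [Set.mem_ofPred_eq, mem_closure_Icc_two_mul_sub_five_iff hm, Set.mem_Icc,
    Set.mem_insert_iff, Set.mem_singleton_iff]
  omega
end

section
/- Let S be a numerical semigroup of type 3 with PF(S) = {P, Q, F} where P < Q < F = F(S). Suppose P + Q − F ∈ S and Q − P ∈ M(S). Let I₁ = {x ∈ M(S) : x − (Q−P) ∈ S}. Then for every s ∈ S and i ∈ I₁ with s < i, we have Q − i ∈ I₁ and Q − s ∉ S ∪ I₁; consequently the map (s,i) ↦ (Q−i, Q−s) is an injection from {(s,i) : s ∈ S, i ∈ I₁, s < i} into {(i,g) : i ∈ I₁, g ∉ S ∪ I₁, g ≥ 0, i < g}, and hence |λ(S)| ≤ |λ(S ∪ I₁)|. -/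
/-!
Every element `j ∈ I₁` satisfies `j + u = P` for some `u ∈ S`: a gap is dominated by a
pseudo-Frobenius number, and domination by `Q` or by `F` would put `P` or `F - j` in `S`.
Hence `I₁` lies below `Q` and is stable under the reflection `j ↦ Q - j`, which sends a pair
`s < i` of `λ(S)` with `i ∈ I₁` to a pair `Q - i < Q - s` of `λ(S ∪ I₁)`. Since `λ(S)` and
`λ(S ∪ I₁)` differ exactly by these two families of pairs, the size can only grow.
-/

/-- The size of the partition associated to a numerical set `T`. -/
noncomputable def lamSize (T : Set ℕ) : ℕ :=
  {p : ℕ × ℕ | p.1 ∈ T ∧ p.2 ∉ T ∧ p.1 < p.2}.ncard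

open Set

def pseudoFrobenius (S : Set ℕ) : Set ℕ :=
  {x | x ∉ S ∧ ∀ t ∈ S, t ≠ 0 → x + t ∈ S}

theorem exists_add_mem_pseudoFrobenius {S : Set ℕ} (h0 : 0 ∈ S)
    (hadd : ∀ a ∈ S, ∀ b ∈ S, a + b ∈ S) (hfin : Sᶜ.Finite) {x : ℕ} (hx : x ∉ S) :
    ∃ u ∈ S, x + u ∈ pseudoFrobenius S := by
  obtain ⟨b, hb⟩ := hfin.bddAbove
  set U := {u | u ∈ S ∧ x + u ∉ S}
  have hU : BddAbove U := ⟨b, fun u hu => (Nat.le_add_left u x).trans (hb hu.2)⟩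
  have hmax : sSup U ∈ U := Nat.sSup_mem ⟨0, h0, hx⟩ hU
  refine ⟨sSup U, hmax.1, hmax.2, fun t ht ht0 => ?_⟩
  by_contra h
  have : sSup U + t ∈ U := ⟨hadd _ hmax.1 _ ht, by rwa [← add_assoc]⟩
  have := le_csSup hU this
  omega

def ltPairs (U V : Set ℕ) : Set (ℕ × ℕ) :=
  {p | p.1 ∈ U ∧ p.2 ∈ V ∧ p.1 < p.2}

section ltPairs

variable {U U' V V' : Set ℕ}

theorem lamSize_eq_ncard_ltPairs (T : Set ℕ) : lamSize T = (ltPairs T Tᶜ).ncard := rfl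

theorem ltPairs_union_left : ltPairs (U ∪ U') V = ltPairs U V ∪ ltPairs U' V := by
  ext p
  simp only [ltPairs, mem_union, mem_ofPred_eq]
  tauto

theorem ltPairs_union_right : ltPairs U (V ∪ V') = ltPairs U V ∪ ltPairs U V' := by
  ext p
  simp only [ltPairs, mem_union, mem_ofPred_eq]
  tauto

theorem disjoint_ltPairs_left (h : Disjoint U U') : Disjoint (ltPairs U V) (ltPairs U' V) :=
  disjoint_left.2 fun _ hp hp' => disjoint_left.1 h hp.1 hp'.1

theorem disjoint_ltPairs_right (h : Disjoint V V') : Disjoint (ltPairs U V) (ltPairs U V') :=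
  disjoint_left.2 fun _ hp hp' => disjoint_left.1 h hp.2.1 hp'.2.1

theorem ltPairs_finite (hV : V.Finite) : (ltPairs U V).Finite := by
  obtain ⟨b, hb⟩ := hV.bddAbove
  refine ((finite_Iic b).prod hV).subset fun p hp => ⟨?_, hp.2.1⟩
  exact hp.2.2.le.trans (hb hp.2.1)

/-- The counting lemma `|λ(S ∪ I)| = |λ(S)| + |A| - |B|`, with the subtraction moved across. -/
theorem lamSize_union_add_ncard {S I : Set ℕ} (hSI : Disjoint S I) (hfin : Sᶜ.Finite) :
    lamSize (S ∪ I) + (ltPairs S I).ncard = lamSize S + (ltPairs I (S ∪ I)ᶜ).ncard := by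
  have hcompl : Sᶜ = (S ∪ I)ᶜ ∪ I := by
    ext x
    have := @disjoint_left.1 hSI x
    simp only [mem_compl_iff, mem_union]
    tauto
  have hfin' : (S ∪ I)ᶜ.Finite := hfin.subset (compl_subset_compl.2 subset_union_left)
  have hIfin : I.Finite := hfin.subset hSI.subset_compl_left
  rw [lamSize_eq_ncard_ltPairs, lamSize_eq_ncard_ltPairs, ltPairs_union_left, hcompl,
    ltPairs_union_right,
    ncard_union_eq (disjoint_ltPairs_left hSI) (ltPairs_finite hfin') (ltPairs_finite hfin'),
    ncard_union_eq (disjoint_ltPairs_right (disjoint_compl_left.mono_right subset_union_right))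
      (ltPairs_finite hfin')
      (ltPairs_finite hIfin)]
  omega

end ltPairs

section reflection

variable {S I : Set ℕ} {Q : ℕ}

theorem sub_notMem_union_of_lt (hadd : ∀ a ∈ S, ∀ b ∈ S, a + b ∈ S) (hQS : Q ∉ S)
    (hSI : Disjoint S I) (hI : ∀ j ∈ I, j < Q ∧ Q - j ∈ I) {s i : ℕ} (hs : s ∈ S) (hi : i ∈ I)
    (hsi : s < i) : Q - s ∉ S ∪ I := by
  have hiQ := (hI i hi).1
  rintro (h | h)
  · have := hadd s hs _ h
    rw [Nat.add_sub_cancel' (by omega)] at this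
    exact hQS this
  · have := (hI _ h).2
    rw [Nat.sub_sub_self (by omega)] at this
    exact disjoint_left.1 hSI hs this

theorem injOn_reflect_ltPairs (hI : ∀ j ∈ I, j < Q ∧ Q - j ∈ I) :
    InjOn (fun p : ℕ × ℕ => (Q - p.2, Q - p.1)) (ltPairs S I) := by
  rintro ⟨s₁, i₁⟩ ⟨-, hi₁, hlt₁⟩ ⟨s₂, i₂⟩ ⟨-, hi₂, hlt₂⟩ heq
  have := (hI i₁ hi₁).1
  have := (hI i₂ hi₂).1
  simp only [Prod.mk.injEq] at heq ⊢
  omega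

theorem mapsTo_reflect_ltPairs (hadd : ∀ a ∈ S, ∀ b ∈ S, a + b ∈ S) (hQS : Q ∉ S)
    (hSI : Disjoint S I) (hI : ∀ j ∈ I, j < Q ∧ Q - j ∈ I) :
    MapsTo (fun p : ℕ × ℕ => (Q - p.2, Q - p.1)) (ltPairs S I) (ltPairs I (S ∪ I)ᶜ) := by
  rintro ⟨s, i⟩ ⟨hs, hi, hsi⟩
  have := (hI i hi).1
  exact ⟨(hI i hi).2, sub_notMem_union_of_lt hadd hQS hSI hI hs hi hsi, by dsimp only; omega⟩

end reflection

/-- The paper's `M(S)`. -/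
def frobeniusGaps (S : Set ℕ) (F : ℕ) : Set ℕ :=
  {x | x ∉ S ∧ F - x ∉ S}

/-- The paper's `I₁` for `d = Q - P`; `d ≤ x` guards the truncated subtraction. -/
def shiftedFrobeniusGaps (S : Set ℕ) (F d : ℕ) : Set ℕ :=
  {x | x ∈ frobeniusGaps S F ∧ d ≤ x ∧ x - d ∈ S}

section typeThree

variable {S : Set ℕ} {P Q F j u : ℕ}

theorem add_eq_of_mem_shiftedFrobeniusGaps (hadd : ∀ a ∈ S, ∀ b ∈ S, a + b ∈ S) (hPS : P ∉ S)
    (hPQ : P ≤ Q) (hj : j ∈ shiftedFrobeniusGaps S F (Q - P)) (hu : u ∈ S)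
    (hju : j + u ∈ ({P, Q, F} : Set ℕ)) : j + u = P := by
  obtain ⟨⟨-, hFj⟩, hdj, hjd⟩ := hj
  simp only [mem_insert_iff, mem_singleton_iff] at hju
  rcases hju with hju | hju | hju
  · exact hju
  · have := hadd u hu _ hjd
    rw [show u + (j - (Q - P)) = P by omega] at this
    exact absurd this hPS
  · rw [show F - j = u by omega] at hFj
    exact absurd hu hFj

theorem sub_mem_shiftedFrobeniusGaps (hadd : ∀ a ∈ S, ∀ b ∈ S, a + b ∈ S) (hPS : P ∉ S)
    (hPQ : P ≤ Q) (hQF : Q ≤ F) (hd : Q - P ∈ frobeniusGaps S F) (hj : j ∈ shiftedFrobeniusGaps S F (Q - P))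
    (hu : u ∈ S) (hju : j + u = P) : Q - j ∈ shiftedFrobeniusGaps S F (Q - P) := by
  obtain ⟨-, hdj, hjd⟩ := hj
  refine ⟨⟨fun h => hPS ?_, fun h => hd.2 ?_⟩, by omega, by rwa [show Q - j - (Q - P) = u by omega]⟩
  · simpa [show Q - j + (j - (Q - P)) = P by omega] using hadd _ h _ hjd
  · simpa [show F - (Q - j) + u = F - (Q - P) by omega] using hadd _ h _ hu

end typeThree

theorem stmt_19_general (S : Set ℕ) (P Q F : ℕ)
    (h0 : 0 ∈ S) (hadd : ∀ a ∈ S, ∀ b ∈ S, a + b ∈ S)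
    (hfin : {n : ℕ | n ∉ S}.Finite)
    (hPQ : P < Q) (hQF : Q < F)
    (hPF : {x : ℕ | x ∉ S ∧ ∀ t ∈ S, t ≠ 0 → x + t ∈ S} = ({P, Q, F} : Set ℕ))
    (hQP : Q - P ∈ {x : ℕ | x ∉ S ∧ F - x ∉ S})
    (I₁ : Set ℕ)
    (hI₁ : I₁ = {x : ℕ | x ∈ {y : ℕ | y ∉ S ∧ F - y ∉ S} ∧
      Q - P ≤ x ∧ x - (Q - P) ∈ S}) :
    (∀ s ∈ S, ∀ i ∈ I₁, s < i → Q - i ∈ I₁ ∧ Q - s ∉ S ∪ I₁) ∧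
    Set.InjOn (fun p : ℕ × ℕ => (Q - p.2, Q - p.1))
      {p : ℕ × ℕ | p.1 ∈ S ∧ p.2 ∈ I₁ ∧ p.1 < p.2} ∧
    Set.MapsTo (fun p : ℕ × ℕ => (Q - p.2, Q - p.1))
      {p : ℕ × ℕ | p.1 ∈ S ∧ p.2 ∈ I₁ ∧ p.1 < p.2}
      {p : ℕ × ℕ | p.1 ∈ I₁ ∧ p.2 ∉ S ∪ I₁ ∧ p.1 < p.2} ∧
    lamSize S ≤ lamSize (S ∪ I₁) := by
  change pseudoFrobenius S = _ at hPF
  change I₁ = shiftedFrobeniusGaps S F (Q - P) at hI₁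
  subst hI₁
  have hPS : P ∉ S := (hPF.ge (mem_insert P _)).1
  have hQS : Q ∉ S := (hPF.ge (mem_insert_of_mem _ (mem_insert Q _))).1
  have hSI : Disjoint S (shiftedFrobeniusGaps S F (Q - P)) :=
    disjoint_right.2 fun _ hj => hj.1.1
  have hreflect : ∀ j ∈ shiftedFrobeniusGaps S F (Q - P),
      j < Q ∧ Q - j ∈ shiftedFrobeniusGaps S F (Q - P) := by
    intro j hj
    obtain ⟨u, hu, hju⟩ := exists_add_mem_pseudoFrobenius h0 hadd hfin hj.1.1
    rw [hPF] at hju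
    have hjuP := add_eq_of_mem_shiftedFrobeniusGaps hadd hPS hPQ.le hj hu hju
    exact ⟨by omega, sub_mem_shiftedFrobeniusGaps hadd hPS hPQ.le hQF.le hQP hj hu hjuP⟩
  have hinj := injOn_reflect_ltPairs (S := S) hreflect
  have hmaps := mapsTo_reflect_ltPairs hadd hQS hSI hreflect
  refine ⟨fun s hs i hi hsi => ⟨(hreflect i hi).2, sub_notMem_union_of_lt hadd hQS hSI hreflect
    hs hi hsi⟩, hinj, hmaps, ?_⟩
  have hcount := lamSize_union_add_ncard hSI hfin
  have hle := ncard_le_ncard_of_injOn _ hmaps hinj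
    (ltPairs_finite (hfin.subset (compl_subset_compl.2 subset_union_left)))
  omega

theorem stmt_19 (S : Set ℕ) (P Q F : ℕ)
    (h0 : 0 ∈ S) (hadd : ∀ a ∈ S, ∀ b ∈ S, a + b ∈ S)
    (hfin : {n : ℕ | n ∉ S}.Finite)
    (hF : IsGreatest {n : ℕ | n ∉ S} F)
    (hPQ : P < Q) (hQF : Q < F)
    (hPF : {x : ℕ | x ∉ S ∧ ∀ t ∈ S, t ≠ 0 → x + t ∈ S} = ({P, Q, F} : Set ℕ))
    (hPQF : ∃ a ∈ S, a + F = P + Q)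
    (hQP : Q - P ∈ {x : ℕ | x ∉ S ∧ F - x ∉ S})
    (I₁ : Set ℕ)
    (hI₁ : I₁ = {x : ℕ | x ∈ {y : ℕ | y ∉ S ∧ F - y ∉ S} ∧
      Q - P ≤ x ∧ x - (Q - P) ∈ S}) :
    (∀ s ∈ S, ∀ i ∈ I₁, s < i → Q - i ∈ I₁ ∧ Q - s ∉ S ∪ I₁) ∧
    Set.InjOn (fun p : ℕ × ℕ => (Q - p.2, Q - p.1))
      {p : ℕ × ℕ | p.1 ∈ S ∧ p.2 ∈ I₁ ∧ p.1 < p.2} ∧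
    Set.MapsTo (fun p : ℕ × ℕ => (Q - p.2, Q - p.1))
      {p : ℕ × ℕ | p.1 ∈ S ∧ p.2 ∈ I₁ ∧ p.1 < p.2}
      {p : ℕ × ℕ | p.1 ∈ I₁ ∧ p.2 ∉ S ∪ I₁ ∧ p.1 < p.2} ∧
    lamSize S ≤ lamSize (S ∪ I₁) :=
  stmt_19_general S P Q F h0 hadd hfin hPQ hQF hPF hQP I₁ hI₁
end
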